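/- Let R₁,…,R_m be languages over a finite alphabet Σ, let ◊ be a fresh symbol not in Σ, and define over Σ ∪ {◊}: B_i is the set of words u₁v₁u₂v₂…u_tv_t (with all u_j, v_j single symbols) such that u₁u₂…u_t ∈ R_i◊* and v₁v₂…v_t ∈ R_i◊*, and B is the set of such alternating words with u_j ≠ v_j for some j. Then the intersection R₁ ∩ … ∩ R_m contains at least two distinct words if and only if B ∩ B₁ ∩ … ∩ B_m is nonempty. -/

import Mathlib

/-- Perfect shuffle of two (equal-length) words: `u₁v₁u₂v₂…`. -/
def perfectShuffle {α : Type} (u v : List α) : List α :=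
  (u.zip v).flatMap fun p => [p.1, p.2]

/-- The padded language `R◊*`: words of `R` (mapped over `some`) padded on the
right by copies of the dummy symbol `◊ = none`. -/
def padLang {α : Type} (R : Set (List α)) : Set (List (Option α)) :=
  {w | ∃ u ∈ R, ∃ k : ℕ, w = u.map some ++ List.replicate k (none : Option α)}

/-- `B_i`: perfect shuffles `u₁v₁…u_tv_t` of two equal-length words, both of which
belong to `R_i◊*`. -/
def shuffleLang {α : Type} (R : Set (List α)) : Set (List (Option α)) :=
  {w | ∃ u v : List (Option α), u.length = v.length ∧
        u ∈ padLang R ∧ v ∈ padLang R ∧ w = perfectShuffle u v}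

/-- `B`: perfect shuffles of two equal-length words that differ in some position. -/
def shuffleDiffLang (α : Type) : Set (List (Option α)) :=
  {w | ∃ u v : List (Option α), u.length = v.length ∧ u ≠ v ∧ w = perfectShuffle u v}

/-! A padded word `x◊ᵏ` determines `x` (delete the dummy symbols) and then `k` (its length), and
the perfect shuffle of two words of equal length determines both. Hence a word of
`B ∩ B₁ ∩ … ∩ B_m` is the shuffle of a single pair `u ≠ v` lying in every `R_i◊*`, and deleting
the dummy symbols gives two distinct words of every `R_i`. Conversely, distinct `x, y` padded
to the common length `|x| + |y|` and shuffled give a word of the intersection. When `m = 0`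
only a nonempty alphabet is needed, which `u ≠ v` provides. -/

namespace List

variable {α : Type}

lemma flatMap_pair_injective :
    Function.Injective fun l : List (α × α) => l.flatMap fun p => [p.1, p.2] := by
  intro l l' h
  induction l generalizing l' with
  | nil => cases l' <;> simp_all
  | cons p l ih =>
    cases l' with
    | nil => simp at h
    | cons p' l' =>
      simp only [flatMap_cons, cons_append, nil_append, cons.injEq] at h
      obtain ⟨h₁, h₂, h⟩ := h
      rw [Prod.ext h₁ h₂, ih h]

end List

section Shuffle

variable {α : Type}

lemma perfectShuffle_inj {u v u' v' : List α} (hlen : u.length = v.length)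
    (hlen' : u'.length = v'.length) (h : perfectShuffle u v = perfectShuffle u' v') :
    u = u' ∧ v = v' := by
  have hzip : u.zip v = u'.zip v' := List.flatMap_pair_injective h
  have := congrArg List.unzip hzip
  rwa [List.unzip_zip hlen, List.unzip_zip hlen', Prod.mk.injEq] at this

@[simp]
lemma reduceOption_map_some_append_replicate_none (x : List α) (k : ℕ) :
    (x.map some ++ List.replicate k none).reduceOption = x := by
  simp [List.reduceOption, List.filterMap_map]

lemma reduceOption_mem_of_mem_padLang {R : Set (List α)} {w : List (Option α)}
    (hw : w ∈ padLang R) : w.reduceOption ∈ R := by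
  obtain ⟨x, hx, k, rfl⟩ := hw
  simpa using hx

lemma eq_of_reduceOption_eq_of_mem_padLang {R S : Set (List α)} {u v : List (Option α)}
    (hu : u ∈ padLang R) (hv : v ∈ padLang S) (hred : u.reduceOption = v.reduceOption)
    (hlen : u.length = v.length) : u = v := by
  obtain ⟨x, -, j, rfl⟩ := hu
  obtain ⟨y, -, k, rfl⟩ := hv
  obtain rfl : x = y := by simpa using hred
  obtain rfl : j = k := by simpa using hlen
  rfl

lemma perfectShuffle_mem_shuffleLang_iff {R : Set (List α)} {u v : List (Option α)}
    (hlen : u.length = v.length) :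
    perfectShuffle u v ∈ shuffleLang R ↔ u ∈ padLang R ∧ v ∈ padLang R := by
  constructor
  · rintro ⟨u', v', hlen', hu', hv', h⟩
    obtain ⟨rfl, rfl⟩ := perfectShuffle_inj hlen hlen' h
    exact ⟨hu', hv'⟩
  · rintro ⟨hu, hv⟩
    exact ⟨u, v, hlen, hu, hv, rfl⟩

lemma nonempty_of_ne_of_length_eq {u v : List (Option α)} (hlen : u.length = v.length)
    (hne : u ≠ v) : Nonempty α := by
  by_contra hα
  rw [not_nonempty_iff] at hα
  exact hne (List.ext_getElem hlen fun _ _ _ => Subsingleton.elim _ _)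

end Shuffle

theorem two_words_in_intersection_iff_shuffle_nonempty_general
    {α : Type} {m : ℕ} (R : Fin m → Set (List α)) :
    (∃ x y : List α, (∀ i, x ∈ R i) ∧ (∀ i, y ∈ R i) ∧ x ≠ y) ↔
      (shuffleDiffLang α ∩ ⋂ i, shuffleLang (R i)).Nonempty := by
  constructor
  · rintro ⟨x, y, hx, hy, hxy⟩
    set u : List (Option α) := x.map some ++ List.replicate y.length none
    set v : List (Option α) := y.map some ++ List.replicate x.length none
    have hlen : u.length = v.length := by simp [u, v, Nat.add_comm]
    have hne : u ≠ v := fun h => hxy (by simpa [u, v] using congrArg List.reduceOption h)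
    refine ⟨perfectShuffle u v, ⟨u, v, hlen, hne, rfl⟩, Set.mem_iInter.2 fun i => ?_⟩
    exact (perfectShuffle_mem_shuffleLang_iff hlen).2 ⟨⟨x, hx i, _, rfl⟩, ⟨y, hy i, _, rfl⟩⟩
  · rintro ⟨_, ⟨u, v, hlen, hne, rfl⟩, hw⟩
    have hpad (i : Fin m) : u ∈ padLang (R i) ∧ v ∈ padLang (R i) :=
      (perfectShuffle_mem_shuffleLang_iff hlen).1 (Set.mem_iInter.1 hw i)
    rcases isEmpty_or_nonempty (Fin m) with hm | ⟨⟨i₀⟩⟩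
    · obtain ⟨a⟩ := nonempty_of_ne_of_length_eq hlen hne
      exact ⟨[], [a], isEmptyElim, isEmptyElim, (List.cons_ne_nil a []).symm⟩
    · refine ⟨u.reduceOption, v.reduceOption, fun i => reduceOption_mem_of_mem_padLang (hpad i).1,
        fun i => reduceOption_mem_of_mem_padLang (hpad i).2, fun h => hne ?_⟩
      exact eq_of_reduceOption_eq_of_mem_padLang (hpad i₀).1 (hpad i₀).2 h hlen

/-- `R₁ ∩ … ∩ R_m` contains at least two distinct words iff
`B ∩ B₁ ∩ … ∩ B_m` is nonempty. -/
theorem two_words_in_intersection_iff_shuffle_nonempty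
    {α : Type} [Fintype α] {m : ℕ} (R : Fin m → Set (List α)) :
    (∃ x y : List α, (∀ i, x ∈ R i) ∧ (∀ i, y ∈ R i) ∧ x ≠ y) ↔
      (shuffleDiffLang α ∩ ⋂ i, shuffleLang (R i)).Nonempty :=
  two_words_in_intersection_iff_shuffle_nonempty_general R
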